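/- Let C = C([-r,0]; Y) with sup norm for a normed space Y, let η : C → [0,r] be Lipschitz with constant L_η with respect to the sup norm, let b∘B be Lipschitz with constant L (i.e., ‖(b∘B)(y₁) − (b∘B)(y₂)‖ ≤ L‖y₁ − y₂‖_Y), and suppose v : [-r,T] → Y is Lipschitz with constant L_v. Define F(φ) = (b∘B)(φ(−η(φ))) for φ ∈ C. Then for u_t, v_t ∈ C([-r,0];Y) which are the time-t segments of functions u, v (with v Lipschitz-L_v), ‖F(u_t) − F(v_t)‖ ≤ L·(1 + L_v·L_η)·‖u_t − v_t‖_C. -/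

import Mathlib

/-! Insert `v (t - η u_t)` between the two arguments of `g`: the first difference is a value of
`u_t - v_t`, hence bounded by its sup norm, and the second is a shift of `v` by `η u_t - η v_t`,
controlled by the Lipschitz constants of `v` and `η`. -/

open Set

section Segments

variable {Y : Type*} [SeminormedAddCommGroup Y]

lemma sub_mem_Icc_of_mem_Icc {r T t a : ℝ} (ht : t ∈ Icc 0 T) (ha : a ∈ Icc 0 r) :
    t - a ∈ Icc (-r) T :=
  ⟨by linarith [ht.1, ha.2], by linarith [ht.2, ha.1]⟩

lemma norm_sub_le_norm_segment_sub {r t a : ℝ} (ha : a ∈ Icc 0 r) {u v : ℝ → Y}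
    {ut vt : C(Icc (-r) (0:ℝ), Y)}
    (hut : ∀ θ : Icc (-r) (0:ℝ), ut θ = u (t + θ.1))
    (hvt : ∀ θ : Icc (-r) (0:ℝ), vt θ = v (t + θ.1)) :
    ‖u (t - a) - v (t - a)‖ ≤ ‖ut - vt‖ := by
  let θ : Icc (-r) (0:ℝ) := ⟨-a, by linarith [ha.2], by linarith [ha.1]⟩
  have hsegment : u (t - a) - v (t - a) = (ut - vt) θ := by
    rw [ContinuousMap.sub_apply, hut, hvt, ← sub_eq_add_neg]
  rw [hsegment]
  exact ContinuousMap.norm_coe_le_norm _ _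

end Segments

lemma norm_sub_le_of_norm_sub_le_mul {Y Z : Type*} [SeminormedAddCommGroup Y]
    [SeminormedAddCommGroup Z] {L : ℝ} {g : Y → Z}
    (hg : ∀ y₁ y₂ : Y, ‖g y₁ - g y₂‖ ≤ L * ‖y₁ - y₂‖) (x y z : Y) :
    ‖g x - g z‖ ≤ L * (‖x - y‖ + ‖y - z‖) :=
  calc ‖g x - g z‖ ≤ ‖g x - g y‖ + ‖g y - g z‖ := norm_sub_le_norm_sub_add_norm_sub _ _ _
    _ ≤ L * ‖x - y‖ + L * ‖y - z‖ := add_le_add (hg _ _) (hg _ _)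
    _ = L * (‖x - y‖ + ‖y - z‖) := by ring

theorem sdd_nonlinearity_lipschitz_estimate_general
    {Y Z : Type*} [NormedAddCommGroup Y]
    [NormedAddCommGroup Z]
    (r T L Leta Lv : ℝ)
    (hL : 0 ≤ L) (hLv : 0 ≤ Lv)
    (η : C(Set.Icc (-r) (0:ℝ), Y) → ℝ)
    (hη_range : ∀ φ, η φ ∈ Set.Icc (0:ℝ) r)
    (hη_lip : ∀ φ ψ, |η φ - η ψ| ≤ Leta * ‖φ - ψ‖)
    (g : Y → Z) (hg : ∀ y₁ y₂ : Y, ‖g y₁ - g y₂‖ ≤ L * ‖y₁ - y₂‖)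
    (u v : ℝ → Y)
    (hv_lip : ∀ s₁ ∈ Set.Icc (-r) T, ∀ s₂ ∈ Set.Icc (-r) T,
      ‖v s₁ - v s₂‖ ≤ Lv * |s₁ - s₂|)
    (t : ℝ) (ht : t ∈ Set.Icc (0:ℝ) T)
    (ut vt : C(Set.Icc (-r) (0:ℝ), Y))
    (hut : ∀ θ : Set.Icc (-r) (0:ℝ), ut θ = u (t + θ.1))
    (hvt : ∀ θ : Set.Icc (-r) (0:ℝ), vt θ = v (t + θ.1)) :
    ‖g (u (t - η ut)) - g (v (t - η vt))‖ ≤ L * (1 + Lv * Leta) * ‖ut - vt‖ := by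
  have hsegment := norm_sub_le_norm_segment_sub (hη_range ut) hut hvt
  have hdelay : ‖v (t - η ut) - v (t - η vt)‖ ≤ Lv * (Leta * ‖ut - vt‖) := by
    refine (hv_lip _ (sub_mem_Icc_of_mem_Icc ht (hη_range ut))
      _ (sub_mem_Icc_of_mem_Icc ht (hη_range vt))).trans ?_
    rw [sub_sub_sub_cancel_left, abs_sub_comm]
    exact mul_le_mul_of_nonneg_left (hη_lip ut vt) hLv
  calc ‖g (u (t - η ut)) - g (v (t - η vt))‖
      ≤ L * (‖u (t - η ut) - v (t - η ut)‖ + ‖v (t - η ut) - v (t - η vt)‖) :=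
        norm_sub_le_of_norm_sub_le_mul hg _ _ _
    _ ≤ L * (‖ut - vt‖ + Lv * (Leta * ‖ut - vt‖)) := by gcongr
    _ = L * (1 + Lv * Leta) * ‖ut - vt‖ := by ring

theorem sdd_nonlinearity_lipschitz_estimate
    {Y Z : Type*} [NormedAddCommGroup Y] [NormedSpace ℝ Y]
    [NormedAddCommGroup Z] [NormedSpace ℝ Z]
    (r T L Leta Lv : ℝ) (hr : 0 < r) (hT : 0 < T)
    (hL : 0 ≤ L) (hLeta : 0 ≤ Leta) (hLv : 0 ≤ Lv)
    (η : C(Set.Icc (-r) (0:ℝ), Y) → ℝ)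
    (hη_range : ∀ φ, η φ ∈ Set.Icc (0:ℝ) r)
    (hη_lip : ∀ φ ψ, |η φ - η ψ| ≤ Leta * ‖φ - ψ‖)
    (g : Y → Z) (hg : ∀ y₁ y₂ : Y, ‖g y₁ - g y₂‖ ≤ L * ‖y₁ - y₂‖)
    (u v : ℝ → Y)
    (hv_lip : ∀ s₁ ∈ Set.Icc (-r) T, ∀ s₂ ∈ Set.Icc (-r) T,
      ‖v s₁ - v s₂‖ ≤ Lv * |s₁ - s₂|)
    (t : ℝ) (ht : t ∈ Set.Icc (0:ℝ) T)
    (ut vt : C(Set.Icc (-r) (0:ℝ), Y))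
    (hut : ∀ θ : Set.Icc (-r) (0:ℝ), ut θ = u (t + θ.1))
    (hvt : ∀ θ : Set.Icc (-r) (0:ℝ), vt θ = v (t + θ.1)) :
    ‖g (u (t - η ut)) - g (v (t - η vt))‖ ≤ L * (1 + Lv * Leta) * ‖ut - vt‖ :=
  sdd_nonlinearity_lipschitz_estimate_general r T L Leta Lv hL hLv η hη_range hη_lip g hg u v hv_lip
    t ht ut vt hut hvt
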